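/- Let m ≥ 2 be an integer, κ ∈ ℝ, α > 0, T > 0, and R > 0 with √κ·R < π when κ > 0. Define s_κ : ℝ → ℝ by s_κ(r) = (1 − cos(√κ·r))/κ if κ > 0, s_κ(r) = r²/2 if κ = 0, and s_κ(r) = (cosh(√(−κ)·r) − 1)/(−κ) if κ < 0 (so that s_κ' = sn_κ). Let φ : ℝ × ℝ → ℝ be C^∞ on an open set containing {(s_κ(r), t) : r ∈ (0,R], t ∈ (0,T)}, suppose ∂ₜφ(s_κ(r),t) = sn_κ(r)²·∂ₛ²φ(s_κ(r),t) + m·sn_κ'(r)·∂ₛφ(s_κ(r),t) for all (r,t) ∈ (0,R] × (0,T), and suppose the Robin boundary condition sn_κ(R)·∂ₛφ(s_κ(R),t) + α·φ(s_κ(R),t) = 0 holds for all t ∈ (0,T). Then for all t ∈ (0,T): sn_κ(R)³·∂ₛ³φ(s_κ(R),t) + ((m+2)·sn_κ(R)·sn_κ'(R) + α·sn_κ(R)²)·∂ₛ²φ(s_κ(R),t) + m·(α·sn_κ'(R) − κ·sn_κ(R))·∂ₛφ(s_κ(R),t) = 0. -/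

import Mathlib

open Set Filter

/-- The generalized sine function `sn_κ` of the simply connected space form
of constant sectional curvature `κ`. -/
noncomputable def sn (κ : ℝ) : ℝ → ℝ := fun r =>
  if 0 < κ then Real.sin (Real.sqrt κ * r) / Real.sqrt κ
  else if κ = 0 then r
  else Real.sinh (Real.sqrt (-κ) * r) / Real.sqrt (-κ)

/-- The reparametrizing variable `s_κ(r)`, an antiderivative of `sn_κ`. -/
noncomputable def sVar (κ : ℝ) : ℝ → ℝ := fun r =>
  if 0 < κ then (1 - Real.cos (Real.sqrt κ * r)) / κ
  else if κ = 0 then r ^ 2 / 2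
  else (Real.cosh (Real.sqrt (-κ) * r) - 1) / (-κ)

/-- Partial derivative of a function of two real variables in its first argument. -/
noncomputable def dS (φ : ℝ → ℝ → ℝ) : ℝ → ℝ → ℝ := fun s t => deriv (fun x => φ x t) s

/-- Partial derivative of a function of two real variables in its second argument. -/
noncomputable def dT (φ : ℝ → ℝ → ℝ) : ℝ → ℝ → ℝ := fun s t => deriv (fun τ => φ s τ) t

open Topology

/-- partial derivative of a two-variable function in direction `v`. -/
noncomputable def pd (f : ℝ × ℝ → ℝ) (v : ℝ × ℝ) : ℝ × ℝ → ℝ := fun p => fderiv ℝ f p v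

/-- uncurrying -/
def unc (φ : ℝ → ℝ → ℝ) : ℝ × ℝ → ℝ := fun p => φ p.1 p.2

section helpers
variable {U : Set (ℝ × ℝ)}

lemma curveS_hasDerivAt (t s : ℝ) : HasDerivAt (fun x : ℝ => ((x, t) : ℝ × ℝ)) (1, 0) s :=
  (hasDerivAt_id s).prodMk (hasDerivAt_const s t)

lemma curveT_hasDerivAt (s t : ℝ) : HasDerivAt (fun τ : ℝ => ((s, τ) : ℝ × ℝ)) (0, 1) t :=
  (hasDerivAt_const t s).prodMk (hasDerivAt_id t)

lemma dS_eq (hU : IsOpen U) {g : ℝ → ℝ → ℝ} {G : ℝ × ℝ → ℝ}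
    (hg : ∀ p ∈ U, g p.1 p.2 = G p) (hG : DifferentiableOn ℝ G U)
    {s t : ℝ} (hst : (s, t) ∈ U) : dS g s t = pd G (1, 0) (s, t) := by
  have hGd : DifferentiableAt ℝ G (s, t) := hG.differentiableAt (hU.mem_nhds hst)
  have hd : HasDerivAt (fun x => G (x, t)) (fderiv ℝ G (s, t) (1, 0)) s :=
    hGd.hasFDerivAt.comp_hasDerivAt s (curveS_hasDerivAt t s)
  have hmem : ∀ᶠ x in 𝓝 s, ((x, t) : ℝ × ℝ) ∈ U :=
    ((Continuous.prodMk_left t).continuousAt).preimage_mem_nhds (hU.mem_nhds hst)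
  have heq : (fun x => g x t) =ᶠ[𝓝 s] fun x => G (x, t) := by
    filter_upwards [hmem] with x hx using hg (x, t) hx
  rw [dS, heq.deriv_eq, hd.deriv]; rfl

lemma dT_eq (hU : IsOpen U) {g : ℝ → ℝ → ℝ} {G : ℝ × ℝ → ℝ}
    (hg : ∀ p ∈ U, g p.1 p.2 = G p) (hG : DifferentiableOn ℝ G U)
    {s t : ℝ} (hst : (s, t) ∈ U) : dT g s t = pd G (0, 1) (s, t) := by
  have hGd : DifferentiableAt ℝ G (s, t) := hG.differentiableAt (hU.mem_nhds hst)
  have hd : HasDerivAt (fun τ => G (s, τ)) (fderiv ℝ G (s, t) (0, 1)) t :=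
    hGd.hasFDerivAt.comp_hasDerivAt t (curveT_hasDerivAt s t)
  have hmem : ∀ᶠ τ in 𝓝 t, ((s, τ) : ℝ × ℝ) ∈ U :=
    ((Continuous.prodMk_right s).continuousAt).preimage_mem_nhds (hU.mem_nhds hst)
  have heq : (fun τ => g s τ) =ᶠ[𝓝 t] fun τ => G (s, τ) := by
    filter_upwards [hmem] with τ hτ using hg (s, τ) hτ
  rw [dT, heq.deriv_eq, hd.deriv]; rfl

lemma contDiffOn_pd (hU : IsOpen U) {f : ℝ × ℝ → ℝ}
    (hf : ContDiffOn ℝ (⊤ : ℕ∞) f U) (v : ℝ × ℝ) : ContDiffOn ℝ (⊤ : ℕ∞) (pd f v) U :=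
  (hf.fderiv_of_isOpen hU (by simp)).clm_apply contDiffOn_const

lemma clairaut (hU : IsOpen U) {f : ℝ × ℝ → ℝ} (hf : ContDiffOn ℝ (⊤ : ℕ∞) f U)
    {p : ℝ × ℝ} (hp : p ∈ U) (v w : ℝ × ℝ) :
    pd (pd f v) w p = pd (pd f w) v p := by
  have hf' : ContDiffOn ℝ (⊤ : ℕ∞) (fderiv ℝ f) U := hf.fderiv_of_isOpen hU (by simp)
  have hd : DifferentiableAt ℝ (fderiv ℝ f) p :=
    (hf'.differentiableOn (by simp)).differentiableAt (hU.mem_nhds hp)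
  have hev : ∀ᶠ q in 𝓝 p, HasFDerivAt f (fderiv ℝ f q) q := by
    filter_upwards [hU.eventually_mem hp] with q hq
    exact ((hf.differentiableOn (by simp)).differentiableAt (hU.mem_nhds hq)).hasFDerivAt
  have hsym := second_derivative_symmetric_of_eventually hev hd.hasFDerivAt v w
  have key : ∀ v w : ℝ × ℝ, pd (pd f v) w p = fderiv ℝ (fderiv ℝ f) p w v := by
    intro v w
    show fderiv ℝ (fun q => fderiv ℝ f q v) p w = _
    rw [fderiv_clm_apply hd (differentiableAt_const v)]
    simp
  rw [key, key, hsym]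

end helpers

lemma hasDerivAt_sVar (κ r : ℝ) : HasDerivAt (sVar κ) (sn κ r) r := by
  rcases lt_trichotomy 0 κ with hκ | hκ | hκ
  · have hc : 0 < Real.sqrt κ := Real.sqrt_pos.2 hκ
    have hκc : κ = Real.sqrt κ ^ 2 := (Real.sq_sqrt hκ.le).symm
    set c := Real.sqrt κ with hcdef
    have hsV : sVar κ = fun x => (1 - Real.cos (c * x)) / κ := by
      funext x; simp [sVar, if_pos hκ, c]
    have hsn : sn κ r = Real.sin (c * r) / c := by simp [sn, if_pos hκ, c]
    rw [hsV, hsn]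
    have h1 : HasDerivAt (fun x : ℝ => c * x) c r := by
      simpa using (hasDerivAt_id r).const_mul c
    have h2 := (Real.hasDerivAt_cos (c * r)).comp r h1
    have h3 := ((hasDerivAt_const r (1:ℝ)).sub h2).div_const κ
    exact h3.congr_deriv (by rw [hκc]; field_simp; ring)
  · subst hκ
    have hsV : sVar 0 = fun x : ℝ => x ^ 2 / 2 := by funext x; simp [sVar]
    have hsn : sn 0 r = r := by simp [sn]
    rw [hsV, hsn]
    simpa using (hasDerivAt_pow 2 r).div_const 2
  · have h0 : ¬ (0 < κ) := by linarith
    have h0' : κ ≠ 0 := by linarith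
    have hc : 0 < Real.sqrt (-κ) := Real.sqrt_pos.2 (by linarith)
    have hκc : κ = -(Real.sqrt (-κ) ^ 2) := by
      rw [Real.sq_sqrt (by linarith : (0:ℝ) ≤ -κ)]; ring
    set c := Real.sqrt (-κ)
    have hsV : sVar κ = fun x => (Real.cosh (c * x) - 1) / (-κ) := by
      funext x; simp [sVar, if_neg h0, if_neg h0', c]
    have hsn : sn κ r = Real.sinh (c * r) / c := by simp [sn, if_neg h0, if_neg h0', c]
    rw [hsV, hsn]
    have h1 : HasDerivAt (fun x : ℝ => c * x) c r := by
      simpa using (hasDerivAt_id r).const_mul c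
    have h2 := (Real.hasDerivAt_cosh (c * r)).comp r h1
    have h3 := (h2.sub (hasDerivAt_const r (1:ℝ))).div_const (-κ)
    exact h3.congr_deriv (by rw [hκc]; field_simp; ring)

lemma hasDerivAt_sn (κ r : ℝ) : HasDerivAt (sn κ) (1 - κ * sVar κ r) r := by
  rcases lt_trichotomy 0 κ with hκ | hκ | hκ
  · have hc : 0 < Real.sqrt κ := Real.sqrt_pos.2 hκ
    have hκc : κ = Real.sqrt κ ^ 2 := (Real.sq_sqrt hκ.le).symm
    set c := Real.sqrt κ
    have hsn : sn κ = fun x => Real.sin (c * x) / c := by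
      funext x; simp [sn, if_pos hκ, c]
    have hsV : sVar κ r = (1 - Real.cos (c * r)) / κ := by simp [sVar, if_pos hκ, c]
    rw [hsn, hsV]
    have h1 : HasDerivAt (fun x : ℝ => c * x) c r := by
      simpa using (hasDerivAt_id r).const_mul c
    have h2 := ((Real.hasDerivAt_sin (c * r)).comp r h1).div_const c
    exact h2.congr_deriv (by rw [hκc]; field_simp; ring)
  · subst hκ
    have hsn : sn 0 = fun x : ℝ => x := by funext x; simp [sn]
    have hsV : sVar 0 r = r ^ 2 / 2 := by simp [sVar]
    rw [hsn, hsV]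
    simpa using hasDerivAt_id' r
  · have h0 : ¬ (0 < κ) := by linarith
    have h0' : κ ≠ 0 := by linarith
    have hc : 0 < Real.sqrt (-κ) := Real.sqrt_pos.2 (by linarith)
    have hκc : κ = -(Real.sqrt (-κ) ^ 2) := by
      rw [Real.sq_sqrt (by linarith : (0:ℝ) ≤ -κ)]; ring
    set c := Real.sqrt (-κ)
    have hsn : sn κ = fun x => Real.sinh (c * x) / c := by
      funext x; simp [sn, if_neg h0, if_neg h0', c]
    have hsV : sVar κ r = (Real.cosh (c * r) - 1) / (-κ) := by
      simp [sVar, if_neg h0, if_neg h0', c]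
    rw [hsn, hsV]
    have h1 : HasDerivAt (fun x : ℝ => c * x) c r := by
      simpa using (hasDerivAt_id r).const_mul c
    have h2 := ((Real.hasDerivAt_sinh (c * r)).comp r h1).div_const c
    exact h2.congr_deriv (by rw [hκc]; field_simp; ring)

lemma sn_sq (κ r : ℝ) : (sn κ r) ^ 2 = 2 * sVar κ r - κ * (sVar κ r) ^ 2 := by
  rcases lt_trichotomy 0 κ with hκ | hκ | hκ
  · have hc : 0 < Real.sqrt κ := Real.sqrt_pos.2 hκ
    have hκc : κ = Real.sqrt κ ^ 2 := (Real.sq_sqrt hκ.le).symm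
    set c := Real.sqrt κ
    have hsn : sn κ r = Real.sin (c * r) / c := by simp [sn, if_pos hκ, c]
    have hsV : sVar κ r = (1 - Real.cos (c * r)) / κ := by simp [sVar, if_pos hκ, c]
    clear_value c
    rw [hsn, hsV, hκc]
    have h := Real.sin_sq_add_cos_sq (c * r)
    field_simp
    linear_combination h
  · subst hκ
    have hsn : sn 0 r = r := by simp [sn]
    have hsV : sVar 0 r = r ^ 2 / 2 := by simp [sVar]
    rw [hsn, hsV]; ring
  · have h0 : ¬ (0 < κ) := by linarith
    have h0' : κ ≠ 0 := by linarith
    have hc : 0 < Real.sqrt (-κ) := Real.sqrt_pos.2 (by linarith)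
    have hκc : κ = -(Real.sqrt (-κ) ^ 2) := by
      rw [Real.sq_sqrt (by linarith : (0:ℝ) ≤ -κ)]; ring
    set c := Real.sqrt (-κ)
    have hsn : sn κ r = Real.sinh (c * r) / c := by simp [sn, if_neg h0, if_neg h0', c]
    have hsV : sVar κ r = (Real.cosh (c * r) - 1) / (-κ) := by
      simp [sVar, if_neg h0, if_neg h0', c]
    clear_value c
    rw [hsn, hsV, hκc]
    have h := Real.cosh_sq_sub_sinh_sq (c * r)
    field_simp
    linear_combination (-1) * h

lemma sn_pos {κ R : ℝ} (hκR : 0 < κ → Real.sqrt κ * R < Real.pi) {r : ℝ}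
    (hr : 0 < r) (hrR : r ≤ R) : 0 < sn κ r := by
  rcases lt_trichotomy 0 κ with hκ | hκ | hκ
  · have hc : 0 < Real.sqrt κ := Real.sqrt_pos.2 hκ
    have h1 : 0 < Real.sqrt κ * r := by positivity
    have h2 : Real.sqrt κ * r < Real.pi :=
      lt_of_le_of_lt (by nlinarith) (hκR hκ)
    simp only [sn, if_pos hκ]
    exact div_pos (Real.sin_pos_of_pos_of_lt_pi h1 h2) hc
  · subst hκ; simpa [sn] using hr
  · have h0 : ¬ (0 < κ) := by linarith
    have h0' : κ ≠ 0 := by linarith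
    have hc : 0 < Real.sqrt (-κ) := Real.sqrt_pos.2 (by linarith)
    simp only [sn, if_neg h0, if_neg h0']
    exact div_pos (Real.sinh_pos_iff.2 (by positivity)) hc

/-- the boundary identity obtained by differentiating the Robin boundary
condition in `t` and using the transformed radial heat equation. -/
theorem stmt9 (m : ℕ) (hm : 2 ≤ m) (κ α T R : ℝ) (hα : 0 < α) (hT : 0 < T) (hR : 0 < R)
    (hκR : 0 < κ → Real.sqrt κ * R < Real.pi)
    (φ : ℝ → ℝ → ℝ) (U : Set (ℝ × ℝ)) (hU : IsOpen U)
    (hmem : ∀ r ∈ Set.Ioc (0:ℝ) R, ∀ t ∈ Set.Ioo (0:ℝ) T, (sVar κ r, t) ∈ U)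
    (hφ : ContDiffOn ℝ (⊤ : ℕ∞) (fun p : ℝ × ℝ => φ p.1 p.2) U)
    (hheat : ∀ r ∈ Set.Ioc (0:ℝ) R, ∀ t ∈ Set.Ioo (0:ℝ) T,
      dT φ (sVar κ r) t
        = (sn κ r) ^ 2 * dS (dS φ) (sVar κ r) t
          + (m : ℝ) * deriv (sn κ) r * dS φ (sVar κ r) t)
    (hrobin : ∀ t ∈ Set.Ioo (0:ℝ) T,
      sn κ R * dS φ (sVar κ R) t + α * φ (sVar κ R) t = 0) :
    ∀ t ∈ Set.Ioo (0:ℝ) T,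
      (sn κ R) ^ 3 * dS (dS (dS φ)) (sVar κ R) t
        + (((m : ℝ) + 2) * sn κ R * deriv (sn κ) R + α * (sn κ R) ^ 2)
            * dS (dS φ) (sVar κ R) t
        + (m : ℝ) * (α * deriv (sn κ) R - κ * sn κ R) * dS φ (sVar κ R) t = 0 := by
  intro t ht
  have hφ' : ContDiffOn ℝ (⊤ : ℕ∞) (unc φ) U := hφ
  have hp0 : (sVar κ R, t) ∈ U := hmem R ⟨hR, le_rfl⟩ t ht
  -- smoothness of iterated partials
  have sΦ1 : ContDiffOn ℝ (⊤ : ℕ∞) (pd (unc φ) (1,0)) U := contDiffOn_pd hU hφ' _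
  have sΦ2 : ContDiffOn ℝ (⊤ : ℕ∞) (pd (pd (unc φ) (1,0)) (1,0)) U := contDiffOn_pd hU sΦ1 _
  have sΨ : ContDiffOn ℝ (⊤ : ℕ∞) (pd (unc φ) (0,1)) U := contDiffOn_pd hU hφ' _
  -- identification of dS/dT with pd on U
  have e1 : ∀ p ∈ U, dS φ p.1 p.2 = pd (unc φ) (1,0) p := fun p hp =>
    dS_eq hU (fun q _ => rfl) (hφ'.differentiableOn (by simp)) hp
  have e2 : ∀ p ∈ U, dS (dS φ) p.1 p.2 = pd (pd (unc φ) (1,0)) (1,0) p := fun p hp =>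
    dS_eq hU e1 (sΦ1.differentiableOn (by simp)) hp
  have e3 : ∀ p ∈ U, dS (dS (dS φ)) p.1 p.2 = pd (pd (pd (unc φ) (1,0)) (1,0)) (1,0) p :=
    fun p hp => dS_eq hU e2 (sΦ2.differentiableOn (by simp)) hp
  have eT : ∀ p ∈ U, dT φ p.1 p.2 = pd (unc φ) (0,1) p := fun p hp =>
    dT_eq hU (fun q _ => rfl) (hφ'.differentiableOn (by simp)) hp
  -- continuity and monotonicity of sVar
  have hdiff : Differentiable ℝ (sVar κ) := fun x => (hasDerivAt_sVar κ x).differentiableAt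
  have hcont : Continuous (sVar κ) := hdiff.continuous
  have hsm : StrictMonoOn (sVar κ) (Icc (R/2) R) := by
    apply strictMonoOn_of_deriv_pos (convex_Icc _ _) hcont.continuousOn
    intro x hx
    rw [interior_Icc] at hx
    rw [(hasDerivAt_sVar κ x).deriv]
    exact sn_pos hκR (by linarith [hx.1]) hx.2.le
  have hmono : sVar κ (R/2) < sVar κ R :=
    hsm ⟨le_rfl, by linarith⟩ ⟨by linarith, le_rfl⟩ (by linarith)
  have hiv : Icc (sVar κ (R/2)) (sVar κ R) ⊆ sVar κ '' Icc (R/2) R :=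
    intermediate_value_Icc (by linarith) hcont.continuousOn
  -- the heat equation in the s-variable, on a left neighborhood of sVar κ R
  have hAB : ∀ s ∈ Ioc (sVar κ (R/2)) (sVar κ R),
      pd (unc φ) (0,1) (s, t)
        = (2*s - κ*s^2) * pd (pd (unc φ) (1,0)) (1,0) (s, t)
          + (m:ℝ)*(1 - κ*s) * pd (unc φ) (1,0) (s, t) := by
    intro s hs
    obtain ⟨r, hrI, hrs⟩ := hiv ⟨hs.1.le, hs.2⟩
    have hrIoc : r ∈ Ioc (0:ℝ) R := ⟨by linarith [hrI.1], hrI.2⟩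
    have hpU : (sVar κ r, t) ∈ U := hmem r hrIoc t ht
    have hh := hheat r hrIoc t ht
    have eT' : dT φ (sVar κ r) t = pd (unc φ) (0,1) (sVar κ r, t) := eT _ hpU
    have e2' : dS (dS φ) (sVar κ r) t = pd (pd (unc φ) (1,0)) (1,0) (sVar κ r, t) := e2 _ hpU
    have e1' : dS φ (sVar κ r) t = pd (unc φ) (1,0) (sVar κ r, t) := e1 _ hpU
    have hsn' : deriv (sn κ) r = 1 - κ * sVar κ r := (hasDerivAt_sn κ r).deriv
    rw [eT', e2', e1', hsn', sn_sq] at hh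
    rw [← hrs]
    linear_combination hh
  -- differentiability of the pieces at the boundary point
  have dΦ : DifferentiableAt ℝ (unc φ) (sVar κ R, t) :=
    (hφ'.differentiableOn (by simp)).differentiableAt (hU.mem_nhds hp0)
  have dΦ1 : DifferentiableAt ℝ (pd (unc φ) (1,0)) (sVar κ R, t) :=
    (sΦ1.differentiableOn (by simp)).differentiableAt (hU.mem_nhds hp0)
  have dΦ2 : DifferentiableAt ℝ (pd (pd (unc φ) (1,0)) (1,0)) (sVar κ R, t) :=
    (sΦ2.differentiableOn (by simp)).differentiableAt (hU.mem_nhds hp0)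
  have dΨ : DifferentiableAt ℝ (pd (unc φ) (0,1)) (sVar κ R, t) :=
    (sΨ.differentiableOn (by simp)).differentiableAt (hU.mem_nhds hp0)
  -- Step 1 : differentiate the Robin condition in t
  have hFt : HasDerivAt
      (fun τ => sn κ R * pd (unc φ) (1,0) (sVar κ R, τ) + α * unc φ (sVar κ R, τ))
      (sn κ R * pd (pd (unc φ) (1,0)) (0,1) (sVar κ R, t)
        + α * pd (unc φ) (0,1) (sVar κ R, t)) t := by
    exact ((dΦ1.hasFDerivAt.comp_hasDerivAt t (curveT_hasDerivAt _ t)).const_mul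
      (sn κ R)).add ((dΦ.hasFDerivAt.comp_hasDerivAt t (curveT_hasDerivAt _ t)).const_mul α)
  have hFeq : (fun τ => sn κ R * pd (unc φ) (1,0) (sVar κ R, τ) + α * unc φ (sVar κ R, τ))
      =ᶠ[𝓝 t] fun _ => (0:ℝ) := by
    filter_upwards [Ioo_mem_nhds ht.1 ht.2] with τ hτ
    have hpτ : (sVar κ R, τ) ∈ U := hmem R ⟨hR, le_rfl⟩ τ hτ
    have e1' : dS φ (sVar κ R) τ = pd (unc φ) (1,0) (sVar κ R, τ) := e1 _ hpτ
    have := hrobin τ hτ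
    rw [e1'] at this
    exact this
  have F1 : sn κ R * pd (pd (unc φ) (1,0)) (0,1) (sVar κ R, t)
      + α * pd (unc φ) (0,1) (sVar κ R, t) = 0 := by
    have h0 : HasDerivAt (fun _ : ℝ => (0:ℝ))
        (sn κ R * pd (pd (unc φ) (1,0)) (0,1) (sVar κ R, t)
          + α * pd (unc φ) (0,1) (sVar κ R, t)) t :=
      hFt.congr_of_eventuallyEq hFeq.symm
    exact ((hasDerivAt_const t (0:ℝ)).unique h0).symm
  -- Step 2 : Clairaut
  have F2 : pd (pd (unc φ) (1,0)) (0,1) (sVar κ R, t)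
      = pd (pd (unc φ) (0,1)) (1,0) (sVar κ R, t) := clairaut hU hφ' hp0 (1,0) (0,1)
  -- Step 3 : differentiate the heat equation in s at the boundary
  have hA : HasDerivAt (fun s => pd (unc φ) (0,1) (s, t))
      (pd (pd (unc φ) (0,1)) (1,0) (sVar κ R, t)) (sVar κ R) :=
    by have := dΨ.hasFDerivAt.comp_hasDerivAt (sVar κ R) (curveS_hasDerivAt t (sVar κ R)); exact this
  have hc2 : HasDerivAt (fun s => pd (pd (unc φ) (1,0)) (1,0) (s, t))
      (pd (pd (pd (unc φ) (1,0)) (1,0)) (1,0) (sVar κ R, t)) (sVar κ R) :=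
    by have := dΦ2.hasFDerivAt.comp_hasDerivAt (sVar κ R) (curveS_hasDerivAt t (sVar κ R)); exact this
  have hc1 : HasDerivAt (fun s => pd (unc φ) (1,0) (s, t))
      (pd (pd (unc φ) (1,0)) (1,0) (sVar κ R, t)) (sVar κ R) :=
    by have := dΦ1.hasFDerivAt.comp_hasDerivAt (sVar κ R) (curveS_hasDerivAt t (sVar κ R)); exact this
  have hpoly1 : HasDerivAt (fun s : ℝ => 2*s - κ*s^2) (2 - 2*κ*sVar κ R) (sVar κ R) := by
    have h := ((hasDerivAt_id (sVar κ R)).const_mul (2:ℝ)).sub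
      ((hasDerivAt_pow 2 (sVar κ R)).const_mul κ)
    exact h.congr_deriv (by push_cast; ring)
  have hpoly2 : HasDerivAt (fun s : ℝ => (m:ℝ)*(1 - κ*s)) (-((m:ℝ)*κ)) (sVar κ R) := by
    have h := (((hasDerivAt_id (sVar κ R)).const_mul κ).const_sub (1:ℝ)).const_mul (m:ℝ)
    exact h.congr_deriv (by ring)
  have hB : HasDerivAt
      (fun s => (2*s - κ*s^2) * pd (pd (unc φ) (1,0)) (1,0) (s, t)
        + (m:ℝ)*(1 - κ*s) * pd (unc φ) (1,0) (s, t))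
      ((2 - 2*κ*sVar κ R) * pd (pd (unc φ) (1,0)) (1,0) (sVar κ R, t)
        + (2*sVar κ R - κ*(sVar κ R)^2) * pd (pd (pd (unc φ) (1,0)) (1,0)) (1,0) (sVar κ R, t)
        + (m:ℝ)*(1 - κ*sVar κ R) * pd (pd (unc φ) (1,0)) (1,0) (sVar κ R, t)
        - (m:ℝ)*κ * pd (unc φ) (1,0) (sVar κ R, t)) (sVar κ R) := by
    have h := (hpoly1.mul hc2).add (hpoly2.mul hc1)
    exact h.congr_deriv (by ring)
  have hevq : (fun s => pd (unc φ) (0,1) (s, t))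
      =ᶠ[𝓝[Iic (sVar κ R)] (sVar κ R)]
      (fun s => (2*s - κ*s^2) * pd (pd (unc φ) (1,0)) (1,0) (s, t)
        + (m:ℝ)*(1 - κ*s) * pd (unc φ) (1,0) (s, t)) := by
    filter_upwards [Ioc_mem_nhdsLE_of_mem ⟨hmono, le_rfl⟩] with s hs
    exact hAB s hs
  have hBW : HasDerivWithinAt (fun s => pd (unc φ) (0,1) (s, t))
      ((2 - 2*κ*sVar κ R) * pd (pd (unc φ) (1,0)) (1,0) (sVar κ R, t)
        + (2*sVar κ R - κ*(sVar κ R)^2) * pd (pd (pd (unc φ) (1,0)) (1,0)) (1,0) (sVar κ R, t)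
        + (m:ℝ)*(1 - κ*sVar κ R) * pd (pd (unc φ) (1,0)) (1,0) (sVar κ R, t)
        - (m:ℝ)*κ * pd (unc φ) (1,0) (sVar κ R, t)) (Iic (sVar κ R)) (sVar κ R) :=
    hB.hasDerivWithinAt.congr_of_eventuallyEq hevq (hAB _ ⟨hmono, le_rfl⟩)
  have F3 : pd (pd (unc φ) (0,1)) (1,0) (sVar κ R, t)
      = (2 - 2*κ*sVar κ R) * pd (pd (unc φ) (1,0)) (1,0) (sVar κ R, t)
        + (2*sVar κ R - κ*(sVar κ R)^2) * pd (pd (pd (unc φ) (1,0)) (1,0)) (1,0) (sVar κ R, t)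
        + (m:ℝ)*(1 - κ*sVar κ R) * pd (pd (unc φ) (1,0)) (1,0) (sVar κ R, t)
        - (m:ℝ)*κ * pd (unc φ) (1,0) (sVar κ R, t) :=
    UniqueDiffWithinAt.eq_deriv _ (uniqueDiffOn_Iic _ _ self_mem_Iic)
      hA.hasDerivWithinAt hBW
  -- Step 4 : the heat equation at r = R
  have F4 : pd (unc φ) (0,1) (sVar κ R, t)
      = (2*sVar κ R - κ*(sVar κ R)^2) * pd (pd (unc φ) (1,0)) (1,0) (sVar κ R, t)
        + (m:ℝ)*(1 - κ*sVar κ R) * pd (unc φ) (1,0) (sVar κ R, t) := by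
    have := hAB (sVar κ R) ⟨hmono, le_rfl⟩
    linear_combination this
  -- conclusion
  have E1 : dS φ (sVar κ R) t = pd (unc φ) (1,0) (sVar κ R, t) := e1 _ hp0
  have E2 : dS (dS φ) (sVar κ R) t = pd (pd (unc φ) (1,0)) (1,0) (sVar κ R, t) := e2 _ hp0
  have E3 : dS (dS (dS φ)) (sVar κ R) t
      = pd (pd (pd (unc φ) (1,0)) (1,0)) (1,0) (sVar κ R, t) := e3 _ hp0
  have hsnR : deriv (sn κ) R = 1 - κ * sVar κ R := (hasDerivAt_sn κ R).deriv
  have F5 : (sn κ R)^2 = 2*sVar κ R - κ*(sVar κ R)^2 := sn_sq κ R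
  rw [E1, E2, E3, hsnR]
  linear_combination F1 - sn κ R * F2 - sn κ R * F3 - α * F4
    + (sn κ R * pd (pd (pd (unc φ) (1,0)) (1,0)) (1,0) (sVar κ R, t)
       + α * pd (pd (unc φ) (1,0)) (1,0) (sVar κ R, t)) * F5
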